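/- Let k be an odd positive integer and G a connected k-regular graph. Then G admits a 1-sum flow with all edge values in {-1, 0, 1}. -/

import Mathlib

/-!
Write `k = 2t + 1`. The neighbourhood relation of `G` is a `k`-regular bipartite graph on two
copies of `V` (the bipartite double cover), so by Hall's theorem it contains a perfect matching,
i.e. a permutation `σ` with `v ~ σ v` for all `v`; removing it leaves a `(k - 1)`-regular bipartite
graph. Removing `t` such matchings leaves a `(t + 1)`-regular spanning subgraph `S` of the double
cover. Weighting the edge `uv` by `[v ∈ S u] + [u ∈ S v] - 1 ∈ {-1, 0, 1}`, the total weight at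
`v` is `(t + 1) + (t + 1) - k = 1`.
-/

open Finset

theorem Finset.exists_injective_of_le_card_of_card_le {α β : Type*} [Fintype α] [DecidableEq β]
    {t : α → Finset β} {m : ℕ} (hm : 0 < m) (hrow : ∀ a, m ≤ #(t a))
    (hcol : ∀ b, #{a | b ∈ t a} ≤ m) :
    ∃ f : α → β, Function.Injective f ∧ ∀ a, f a ∈ t a := by
  refine (all_card_le_biUnion_card_iff_exists_injective t).mp fun s => ?_
  refine Nat.le_of_mul_le_mul_right (card_mul_le_card_mul (fun a b => b ∈ t a) ?_ ?_) hm
  · intro a ha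
    exact (hrow a).trans <| card_le_card fun b hb => mem_filter.mpr ⟨mem_biUnion.mpr ⟨a, ha, hb⟩, hb⟩
  · intro b _
    exact (card_le_card (filter_subset_filter _ (subset_univ s))).trans (hcol b)

namespace SimpleGraph

variable {V : Type*} [Fintype V] [DecidableEq V] (G : SimpleGraph V) [DecidableRel G.Adj]

theorem incidenceFinset_eq_image_neighborFinset (v : V) :
    G.incidenceFinset v = (G.neighborFinset v).image (s(v, ·)) := by
  ext e
  induction e with
  | _ a b =>
    simp only [mem_incidenceFinset, mk'_mem_incidenceSet_iff, mem_image, mem_neighborFinset,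
      Sym2.eq, Sym2.rel_iff']
    grind [G.adj_symm]

theorem sum_incidenceFinset_eq_sum_neighborFinset {M : Type*} [AddCommMonoid M]
    (f : Sym2 V → M) (v : V) :
    ∑ e ∈ G.incidenceFinset v, f e = ∑ u ∈ G.neighborFinset v, f s(v, u) := by
  rw [incidenceFinset_eq_image_neighborFinset, sum_image]
  intro a _ b _ h
  exact Sym2.congr_right.mp h

end SimpleGraph

section DoubleCover

variable {V : Type*} [DecidableEq V]

/-- `S` is an `m`-regular spanning subgraph of the bipartite double cover `V × V`, with `S v` the
right-hand neighbours of the left-hand copy of `v`. -/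
def IsBiregular [Fintype V] (S : V → Finset V) (m : ℕ) : Prop :=
  (∀ v, #(S v) = m) ∧ ∀ u, #{v | u ∈ S v} = m

namespace IsBiregular

variable [Fintype V] {S : V → Finset V} {m : ℕ}

theorem exists_perm (h : IsBiregular S m) (hm : 0 < m) :
    ∃ σ : Equiv.Perm V, ∀ v, σ v ∈ S v := by
  obtain ⟨f, hf, hfS⟩ := exists_injective_of_le_card_of_card_le hm (fun v => (h.1 v).ge)
    fun u => (h.2 u).le
  exact ⟨Equiv.ofBijective f (Finite.injective_iff_bijective.mp hf), hfS⟩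

theorem erase_perm (h : IsBiregular S (m + 1)) {σ : Equiv.Perm V} (hσ : ∀ v, σ v ∈ S v) :
    IsBiregular (fun v => (S v).erase (σ v)) m := by
  refine ⟨fun v => by rw [card_erase_of_mem (hσ v), h.1 v, Nat.add_sub_cancel], fun u => ?_⟩
  have hcol : ({v | u ∈ (S v).erase (σ v)} : Finset V) =
      ({v | u ∈ S v} : Finset V).erase (σ.symm u) := by
    ext v
    simp only [mem_filter, mem_univ, true_and, mem_erase, ne_eq, Equiv.eq_symm_apply]
    exact and_congr_left' (not_congr eq_comm)
  rw [hcol, card_erase_of_mem (by simpa using hσ (σ.symm u)), h.2 u, Nat.add_sub_cancel]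

theorem exists_subset {r n : ℕ} (h : IsBiregular S (r + n)) :
    ∃ T : V → Finset V, (∀ v, T v ⊆ S v) ∧ IsBiregular T r := by
  induction n generalizing S with
  | zero => exact ⟨S, fun _ => subset_rfl, h⟩
  | succ n ih =>
    obtain ⟨σ, hσ⟩ := h.exists_perm (by omega)
    obtain ⟨T, hTS, hT⟩ := ih (h.erase_perm hσ)
    exact ⟨T, fun v => (hTS v).trans (erase_subset _ _), hT⟩

end IsBiregular

theorem SimpleGraph.IsRegularOfDegree.isBiregular_neighborFinset [Fintype V] {G : SimpleGraph V}
    [DecidableRel G.Adj] {k : ℕ} (h : G.IsRegularOfDegree k) :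
    IsBiregular (fun v => G.neighborFinset v) k := by
  refine ⟨fun v => by rw [G.card_neighborFinset_eq_degree, h v], fun u => ?_⟩
  have hcol : ({v | u ∈ G.neighborFinset v} : Finset V) = G.neighborFinset u := by
    ext v
    simp [G.adj_comm]
  rw [hcol, G.card_neighborFinset_eq_degree, h u]

def choiceFlow (S : V → Finset V) : Sym2 V → ℝ :=
  Sym2.lift ⟨fun u v => (if v ∈ S u then 1 else 0) + (if u ∈ S v then 1 else 0) - 1,
    fun _ _ => by ring⟩

theorem choiceFlow_mk (S : V → Finset V) (u v : V) :
    choiceFlow S s(u, v) = (if v ∈ S u then 1 else 0) + (if u ∈ S v then 1 else 0) - 1 :=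
  rfl

theorem choiceFlow_mem (S : V → Finset V) (e : Sym2 V) :
    choiceFlow S e = -1 ∨ choiceFlow S e = 0 ∨ choiceFlow S e = 1 := by
  induction e with
  | _ u v => rw [choiceFlow_mk]; split_ifs <;> norm_num

theorem SimpleGraph.sum_incidenceFinset_choiceFlow [Fintype V] {G : SimpleGraph V}
    [DecidableRel G.Adj] {k r : ℕ} (hG : G.IsRegularOfDegree k) {S : V → Finset V}
    (hSG : ∀ v, S v ⊆ G.neighborFinset v) (hS : IsBiregular S r) (v : V) :
    ∑ e ∈ G.incidenceFinset v, choiceFlow S e = 2 * r - k := by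
  have hout : ({u ∈ G.neighborFinset v | u ∈ S v} : Finset V) = S v := by
    rw [filter_mem_eq_inter, inter_eq_right.mpr (hSG v)]
  have hin : ({u ∈ G.neighborFinset v | v ∈ S u} : Finset V) = ({u | v ∈ S u} : Finset V) := by
    ext u
    simp only [mem_filter, mem_univ, true_and, mem_neighborFinset, and_iff_right_iff_imp]
    exact fun hvu => G.adj_symm ((G.mem_neighborFinset u v).mp (hSG u hvu))
  simp only [G.sum_incidenceFinset_eq_sum_neighborFinset, choiceFlow_mk, sum_sub_distrib,
    sum_add_distrib, sum_boole, hout, hin, hS.1 v, hS.2 v, sum_const,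
    card_neighborFinset_eq_degree, hG v]
  ring

end DoubleCover

theorem stmt_18_general {V : Type*} [Fintype V] [DecidableEq V] (G : SimpleGraph V) [DecidableRel G.Adj]
    (k : ℕ) (hodd : Odd k) (hreg : ∀ v, G.degree v = k) :
    ∃ ω : Sym2 V → ℝ, (∀ e ∈ G.edgeSet, ω e = -1 ∨ ω e = 0 ∨ ω e = 1) ∧
      ∀ v, ∑ e ∈ G.incidenceFinset v, ω e = 1 := by
  obtain ⟨t, rfl⟩ := hodd
  have hG : IsBiregular (fun v => G.neighborFinset v) ((t + 1) + t) := by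
    rw [show t + 1 + t = 2 * t + 1 by ring]
    exact SimpleGraph.IsRegularOfDegree.isBiregular_neighborFinset hreg
  obtain ⟨S, hSG, hS⟩ := hG.exists_subset
  refine ⟨choiceFlow S, fun e _ => choiceFlow_mem S e, fun v => ?_⟩
  rw [SimpleGraph.sum_incidenceFinset_choiceFlow hreg hSG hS]
  push_cast
  ring

/-- Every connected `k`-regular graph with `k` odd admits a 1-sum `{-1,0,1}`-flow. -/
theorem stmt_18 {V : Type*} [Fintype V] [DecidableEq V] (G : SimpleGraph V) [DecidableRel G.Adj]
    (k : ℕ) (hk : 0 < k) (hodd : Odd k) (hconn : G.Connected) (hreg : ∀ v, G.degree v = k) :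
    ∃ ω : Sym2 V → ℝ, (∀ e ∈ G.edgeSet, ω e = -1 ∨ ω e = 0 ∨ ω e = 1) ∧
      ∀ v, ∑ e ∈ G.incidenceFinset v, ω e = 1 :=
  stmt_18_general G k hodd hreg
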